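/- For every m ≥ 0 and every fixed slope s ∈ {1, …, 2^m}, the family of digital lines {D_m(h,s) : h ∈ ℤ} is pairwise disjoint and its union equals the strip {(i,j) ∈ ℤ² : 1 ≤ j ≤ 2^m}; that is, the digital lines of a fixed slope partition the strip. -/

import Mathlib

/-!
A digital line meets every row `1 ≤ j ≤ 2^m` of the strip in exactly one point, and that point
sits in column `h + rowOffset m s j`, where the offset does not depend on `h`. So the lines of a
fixed slope are the horizontal translates of one another by every integer, which is exactly a
partition of the strip.
-/

/-- Digital lines of the ADRT, by recursion on the level `m`.
`DLine 0 h s = {(h,1)}`; at level `m+1`, the line of offset `h` and slope `s`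
is the union of the level-`m` line `DLine m h (s/2)` (lower half) and the
level-`m` line `DLine m (h + s/2 + s%2) s` shifted up by `2^m` rows. -/
def DLine : ℕ → ℤ → ℕ → Finset (ℤ × ℤ)
  | 0, h, _ => {(h, 1)}
  | m + 1, h, s =>
      DLine m h (s / 2) ∪
        (DLine m (h + (s / 2 : ℕ) + (s % 2 : ℕ)) s).image (fun p => (p.1, p.2 + 2 ^ m))

def rowOffset : ℕ → ℕ → ℤ → ℤ
  | 0, _, _ => 0
  | m + 1, s, j => if j ≤ 2 ^ m then rowOffset m (s / 2) j
      else (s / 2 : ℕ) + (s % 2 : ℕ) + rowOffset m s (j - 2 ^ m)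

theorem mem_image_shiftRows {t : Finset (ℤ × ℤ)} {c : ℤ} {p : ℤ × ℤ} :
    p ∈ t.image (fun q => (q.1, q.2 + c)) ↔ (p.1, p.2 - c) ∈ t := by
  rw [Finset.mem_image]
  constructor
  · rintro ⟨q, hq, rfl⟩
    simpa using hq
  · intro hp
    exact ⟨_, hp, by simp⟩

theorem mem_DLine_iff (m s : ℕ) (h : ℤ) (p : ℤ × ℤ) :
    p ∈ DLine m h s ↔ 1 ≤ p.2 ∧ p.2 ≤ 2 ^ m ∧ p.1 = h + rowOffset m s p.2 := by
  induction m generalizing s h p with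
  | zero =>
    simp only [DLine, rowOffset, Finset.mem_singleton, pow_zero, add_zero, Prod.ext_iff]
    omega
  | succ m ih =>
    have hpos : (0 : ℤ) < 2 ^ m := by positivity
    simp only [DLine, Finset.mem_union, mem_image_shiftRows, ih, rowOffset, pow_succ]
    split_ifs <;> omega

theorem DLine_disjoint (m s : ℕ) {h k : ℤ} (hne : h ≠ k) :
    Disjoint (DLine m h s) (DLine m k s) := by
  refine Finset.disjoint_left.mpr fun p hph hpk => hne ?_
  rw [mem_DLine_iff] at hph hpk
  omega

theorem exists_mem_DLine_iff (m s : ℕ) (p : ℤ × ℤ) :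
    (∃ h : ℤ, p ∈ DLine m h s) ↔ 1 ≤ p.2 ∧ p.2 ≤ 2 ^ m := by
  simp only [mem_DLine_iff]
  constructor
  · rintro ⟨_, h1, h2, _⟩
    exact ⟨h1, h2⟩
  · rintro ⟨h1, h2⟩
    exact ⟨p.1 - rowOffset m s p.2, h1, h2, by ring⟩

theorem dline_partition_general (m : ℕ) (s : ℕ) :
    (∀ h k : ℤ, h ≠ k → Disjoint (DLine m h s) (DLine m k s)) ∧
      (∀ p : ℤ × ℤ, (1 ≤ p.2 ∧ p.2 ≤ 2 ^ m) ↔ ∃ h : ℤ, p ∈ DLine m h s) :=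
  ⟨fun _ _ hne => DLine_disjoint m s hne, fun p => (exists_mem_DLine_iff m s p).symm⟩

/-- For a fixed slope `s ∈ {1,…,2^m}`, the digital lines `{D_m(h,s) : h ∈ ℤ}`
are pairwise disjoint and their union is the strip `{(i,j) : 1 ≤ j ≤ 2^m}`. -/
theorem dline_partition (m : ℕ) (s : ℕ) (hs1 : 1 ≤ s) (hs2 : s ≤ 2 ^ m) :
    (∀ h k : ℤ, h ≠ k → Disjoint (DLine m h s) (DLine m k s)) ∧
      (∀ p : ℤ × ℤ, (1 ≤ p.2 ∧ p.2 ≤ 2 ^ m) ↔ ∃ h : ℤ, p ∈ DLine m h s) :=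
  dline_partition_general m s
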